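/- For all m ≥ 1 and n ≥ 1, A^{2m}(B(n)) − 1 = A(B^m(A(n))), where A(n) = ⌊nφ⌋, B(n) = ⌊nφ²⌋, and A^k, B^k denote k-fold iterates. -/

import Mathlib

noncomputable def phi : ℝ := (1 + Real.sqrt 5) / 2

/-- Lower Wythoff sequence. -/
noncomputable def A (n : ℕ) : ℕ := (⌊(n : ℝ) * phi⌋).toNat

/-- Upper Wythoff sequence. -/
noncomputable def B (n : ℕ) : ℕ := (⌊(n : ℝ) * phi ^ 2⌋).toNat

/-- `d` is the digit sequence of the Zeckendorf expansion of `N`: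
digits are 0/1, no two consecutive 1's, finitely many nonzero digits,
and `N = Σ dᵢ · F_{i+2}`. -/
def IsZeck (N : ℕ) (d : ℕ → ℕ) : Prop :=
  (∀ i, d i ≤ 1) ∧ (∀ i, ¬(d i = 1 ∧ d (i + 1) = 1)) ∧
  (Function.support d).Finite ∧ N = ∑ᶠ i, d i * Nat.fib (i + 2)

/-!
Write `ε = fract (k φ) ∈ (0, 1)` for `k ≥ 1` (irrationality of `φ`). From `φ² = φ + 1` one
gets `(A k) φ = B k - ε (φ - 1)` and `(B k) φ = A k + B k + ε (2 - φ)`, which pins down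
`A (A k) = B k - 1`, `A (A k + 1) = B k + 1` and `A (B k + 1) = A (B k) + 1`.
With `w = B^[m] (A n)` these give `A (A (A w + 1)) = A (B w + 1) = A (B w) + 1`,
so `A^[2m] (B n) = A (B^[m] (A n)) + 1` follows by induction on `m`, starting from
`B n = A (A n) + 1`.
-/

open Real

lemma phi_sq : phi ^ 2 = phi + 1 := goldenRatio_sq

lemma one_lt_phi : 1 < phi := one_lt_goldenRatio

lemma phi_lt_two : phi < 2 := goldenRatio_lt_two

lemma irrational_phi : Irrational phi := goldenRatio_irrational

lemma A_eq_floor (k : ℕ) : A k = ⌊(k : ℝ) * phi⌋₊ := Int.floor_toNat _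

lemma mul_phi_nonneg (k : ℕ) : 0 ≤ (k : ℝ) * phi := by
  have := one_lt_phi; positivity

lemma A_eq_iff {k a : ℕ} : A k = a ↔ (a : ℝ) ≤ k * phi ∧ k * phi < a + 1 := by
  rw [A_eq_floor, Nat.floor_eq_iff (mul_phi_nonneg k)]

lemma B_eq_A_add (k : ℕ) : B k = A k + k := by
  have h : (k : ℝ) * phi ^ 2 = k * phi + k := by rw [phi_sq]; ring
  rw [B, Int.floor_toNat, h, Nat.floor_add_natCast (mul_phi_nonneg k), A_eq_floor]

lemma le_B (k : ℕ) : k ≤ B k := by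
  rw [B_eq_A_add]; omega

lemma le_A (k : ℕ) : k ≤ A k := by
  rw [A_eq_floor]
  exact Nat.le_floor (le_mul_of_one_le_right k.cast_nonneg one_lt_phi.le)

lemma cast_A (k : ℕ) : (A k : ℝ) = k * phi - Int.fract (k * phi) := by
  rw [A_eq_floor, natCast_floor_eq_intCast_floor (mul_phi_nonneg k), Int.self_sub_fract]

lemma fract_mul_phi_pos {k : ℕ} (hk : k ≠ 0) : 0 < Int.fract ((k : ℝ) * phi) :=
  Int.fract_pos.mpr ((irrational_phi.natCast_mul hk).ne_int _)

lemma A_mul_phi (k : ℕ) :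
    (A k : ℝ) * phi = B k - Int.fract ((k : ℝ) * phi) * (phi - 1) := by
  have hB : (B k : ℝ) = A k + k := by exact_mod_cast B_eq_A_add k
  rw [hB, cast_A]
  linear_combination (k : ℝ) * phi_sq

lemma B_mul_phi (k : ℕ) :
    (B k : ℝ) * phi = A k + B k + Int.fract ((k : ℝ) * phi) * (2 - phi) := by
  have hB : (B k : ℝ) = A k + k := by exact_mod_cast B_eq_A_add k
  rw [hB, add_mul, A_mul_phi, hB, cast_A]
  ring

section

variable {k : ℕ} (hk : k ≠ 0)
include hk

lemma A_mul_phi_mem : (B k : ℝ) + 1 - phi < A k * phi ∧ (A k : ℝ) * phi < B k := by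
  have hε := fract_mul_phi_pos hk
  have hε' := Int.fract_lt_one ((k : ℝ) * phi)
  have := one_lt_phi; have := phi_lt_two
  rw [A_mul_phi]
  constructor <;> nlinarith

lemma B_mul_phi_mem :
    (A k + B k : ℝ) < B k * phi ∧ (B k : ℝ) * phi < A k + B k + (2 - phi) := by
  have hε := fract_mul_phi_pos hk
  have hε' := Int.fract_lt_one ((k : ℝ) * phi)
  have := phi_lt_two
  rw [B_mul_phi]
  constructor <;> nlinarith

lemma A_A_add_one_eq_B : A (A k) + 1 = B k := by
  obtain ⟨b, hb⟩ := Nat.exists_eq_add_one.mpr (hk.bot_lt.trans_le (le_B k))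
  obtain ⟨hlo, hhi⟩ := A_mul_phi_mem hk
  have := phi_lt_two
  rw [hb, Nat.add_right_cancel_iff, A_eq_iff]
  push_cast [hb] at hlo hhi ⊢
  constructor <;> linarith

lemma A_A_add_one : A (A k + 1) = B k + 1 := by
  obtain ⟨hlo, hhi⟩ := A_mul_phi_mem hk
  have := one_lt_phi; have := phi_lt_two
  rw [A_eq_iff]
  push_cast
  rw [add_one_mul]
  constructor <;> linarith

lemma A_B : A (B k) = A k + B k := by
  obtain ⟨hlo, hhi⟩ := B_mul_phi_mem hk
  have := one_lt_phi
  rw [A_eq_iff]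
  push_cast
  constructor <;> linarith

lemma A_B_add_one : A (B k + 1) = A (B k) + 1 := by
  obtain ⟨hlo, hhi⟩ := B_mul_phi_mem hk
  have := one_lt_phi
  rw [A_B hk, A_eq_iff]
  push_cast
  rw [add_one_mul]
  constructor <;> linarith

end

lemma iterate_A_B (n : ℕ) (hn : n ≠ 0) (m : ℕ) :
    A^[2 * m] (B n) = A (B^[m] (A n)) + 1 := by
  induction m with
  | zero => exact (A_A_add_one_eq_B hn).symm
  | succ m ih =>
    set w := B^[m] (A n)
    have hw : w ≠ 0 := (Nat.pos_of_ne_zero hn |>.trans_le <|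
      (le_A n).trans (Function.id_le_iterate_of_id_le le_B m (A n))).ne'
    rw [Nat.mul_succ, add_comm, Function.iterate_add_apply, ih, Function.iterate_succ_apply' B]
    change A (A (A w + 1)) = A (B w) + 1
    rw [A_A_add_one hw, A_B_add_one hw]

theorem iterate_A_B_sub_one'_general (m n : ℕ) (hn : 1 ≤ n) :
    A^[2 * m] (B n) - 1 = A (B^[m] (A n)) := by
  rw [iterate_A_B n (by omega) m, Nat.add_sub_cancel]

/-- A^{2m}(B(n)) − 1 = A(B^m(A(n))) for m, n ≥ 1. -/
theorem iterate_A_B_sub_one' (m n : ℕ) (hm : 1 ≤ m) (hn : 1 ≤ n) :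
    A^[2 * m] (B n) - 1 = A (B^[m] (A n)) :=
  iterate_A_B_sub_one'_general m n hn
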